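/- arXiv:1403.7737 — 2 statements merged into one kernel-verified Lean document; each statement's English description precedes it below -/
import Mathlib

section
/- Let X ∈ ℝ^{n×d} (n ≥ d, rank(X) = d), y ∈ ℝ^n, β_lsr = (XᵀX)⁻¹Xᵀy, and let U ∈ ℝ^{n×d} have orthonormal columns spanning the column space of X. Let S ∈ ℝ^{c×n} be any matrix such that rank(SU) = d, and let β̃ be any minimizer of β ↦ ‖Sy − SXβ‖₂². Then the vector z = UᵀX(β_lsr − β̃) satisfies ‖z‖₂ ≤ ‖UᵀSᵀS(I_n − UUᵀ)y‖₂ / σ_min²(SU), where σ_min(SU) is the smallest singular value of SU. -/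
/-!
Write `X = U M` with `M = UᵀX` invertible, so that `X β_lsr = UUᵀy` and `U z = UUᵀy − Xβ̃`.
The normal equations of the sketched problem, `(SX)ᵀ S (y − Xβ̃) = 0`, reduce after cancelling
the invertible `Mᵀ` to `(SU)ᵀ S (y − Xβ̃) = 0`, whence `(SU)ᵀ(SU) z = −UᵀSᵀS(I − UUᵀ)y`.
Finally `σ_min(SU)² ‖z‖² ≤ ‖SUz‖² = ⟪(SU)ᵀ(SU) z, z⟫ ≤ ‖(SU)ᵀ(SU) z‖ ‖z‖` by Cauchy–Schwarz.
-/

open Matrix BigOperators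

/-- Euclidean norm of a real vector. -/
noncomputable def vnorm {m : ℕ} (v : Fin m → ℝ) : ℝ := Real.sqrt (∑ i, v i ^ 2)

/-- Smallest singular value of a real matrix: `min_{‖v‖=1} ‖Xv‖`. -/
noncomputable def sigmaMin {n d : ℕ} (X : Matrix (Fin n) (Fin d) ℝ) : ℝ :=
  sInf {r : ℝ | ∃ v : Fin d → ℝ, vnorm v = 1 ∧ r = vnorm (X.mulVec v)}

open WithLp (toLp)
open scoped RealInnerProductSpace

section vnorm

variable {m : ℕ}

lemma vnorm_eq_norm (v : Fin m → ℝ) : vnorm v = ‖toLp 2 v‖ := by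
  simp [vnorm, EuclideanSpace.norm_eq]

lemma vnorm_nonneg (v : Fin m → ℝ) : 0 ≤ vnorm v := Real.sqrt_nonneg _

lemma vnorm_pos {v : Fin m → ℝ} (hv : v ≠ 0) : 0 < vnorm v := by
  rwa [vnorm_eq_norm, norm_pos_iff, Ne, WithLp.toLp_eq_zero]

lemma vnorm_smul (c : ℝ) (v : Fin m → ℝ) : vnorm (c • v) = |c| * vnorm v := by
  rw [vnorm_eq_norm, vnorm_eq_norm, WithLp.toLp_smul, norm_smul, Real.norm_eq_abs]

lemma vnorm_neg (v : Fin m → ℝ) : vnorm (-v) = vnorm v := by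
  rw [vnorm_eq_norm, vnorm_eq_norm, WithLp.toLp_neg, norm_neg]

lemma vnorm_sq (v : Fin m → ℝ) : vnorm v ^ 2 = v ⬝ᵥ v := by
  rw [vnorm_eq_norm, ← real_inner_self_eq_norm_sq, EuclideanSpace.inner_toLp_toLp, star_trivial]

lemma dotProduct_le_vnorm_mul_vnorm (v w : Fin m → ℝ) : v ⬝ᵥ w ≤ vnorm v * vnorm w := by
  have h := real_inner_le_norm (toLp 2 w) (toLp 2 v)
  rwa [EuclideanSpace.inner_toLp_toLp, star_trivial, ← vnorm_eq_norm, ← vnorm_eq_norm,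
    mul_comm] at h

end vnorm

theorem real_inner_eq_zero_of_forall_norm_le_norm_add_smul {E : Type*} [NormedAddCommGroup E]
    [InnerProductSpace ℝ E] {r w : E} (h : ∀ t : ℝ, ‖r‖ ≤ ‖r + t • w‖) : ⟪r, w⟫ = 0 := by
  have hquad : ∀ t : ℝ, 0 ≤ ‖w‖ ^ 2 * (t * t) + 2 * ⟪r, w⟫ * t + 0 := by
    intro t
    have h2 := pow_le_pow_left₀ (norm_nonneg r) (h t) 2
    rw [norm_add_sq_real, inner_smul_right, norm_smul, mul_pow, Real.norm_eq_abs, sq_abs] at h2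
    nlinarith
  have hdisc := discrim_le_zero hquad
  rw [discrim] at hdisc
  nlinarith [sq_nonneg ⟪r, w⟫]

theorem transpose_mulVec_sub_eq_zero_of_isMin {m d : ℕ} (A : Matrix (Fin m) (Fin d) ℝ)
    (b : Fin m → ℝ) {β₀ : Fin d → ℝ} (hmin : ∀ β, vnorm (b - A *ᵥ β₀) ≤ vnorm (b - A *ᵥ β)) :
    Aᵀ *ᵥ (b - A *ᵥ β₀) = 0 := by
  set r := b - A *ᵥ β₀
  set g := Aᵀ *ᵥ r
  have horth : ⟪toLp 2 r, toLp 2 (A *ᵥ g)⟫ = 0 := by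
    refine real_inner_eq_zero_of_forall_norm_le_norm_add_smul fun t => ?_
    have h := hmin (β₀ - t • g)
    rwa [show b - A *ᵥ (β₀ - t • g) = r + t • (A *ᵥ g) by
        rw [mulVec_sub, mulVec_smul, sub_sub_eq_add_sub, add_sub_right_comm],
      vnorm_eq_norm, vnorm_eq_norm, WithLp.toLp_add, WithLp.toLp_smul] at h
  rw [EuclideanSpace.inner_toLp_toLp, star_trivial, dotProduct_comm, dotProduct_mulVec,
    ← mulVec_transpose] at horth
  exact dotProduct_self_eq_zero.mp horth

theorem mulVec_injective_of_rank_eq {m n K : Type*} [Fintype n] [Field K]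
    (A : Matrix m n K) (h : A.rank = Fintype.card n) : Function.Injective A.mulVec := by
  have hker : Module.finrank K (LinearMap.ker A.mulVecLin) = 0 := by
    have := LinearMap.finrank_range_add_finrank_ker A.mulVecLin
    rw [Module.finrank_fintype_fun_eq_card, ← Matrix.rank, h] at this
    omega
  exact LinearMap.ker_eq_bot.mp (Submodule.finrank_eq_zero.mp hker)

section Projection

variable {m n R : Type*} [Fintype n] [DecidableEq n]

theorem mul_transpose_mul_eq_of_range_le {k : Type*} [Fintype m] [Fintype k] [CommRing R]
    {U : Matrix m n R} {X : Matrix m k R}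
    (hU : Uᵀ * U = 1) (hX : LinearMap.range X.mulVecLin ≤ LinearMap.range U.mulVecLin) :
    U * (Uᵀ * X) = X := by
  refine ext_iff_mulVec.mpr fun v => ?_
  obtain ⟨w, hw⟩ := hX ⟨v, rfl⟩
  simp only [mulVecLin_apply] at hw
  rw [← mulVec_mulVec, ← mulVec_mulVec, ← hw, mulVec_mulVec w Uᵀ U, hU, one_mulVec]

theorem isUnit_of_mul_eq_of_mulVec_injective [Field R] {U : Matrix m n R} {M : Matrix n n R}
    {X : Matrix m n R} (hX : U * M = X) (hinj : Function.Injective X.mulVec) : IsUnit M := by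
  refine mulVec_injective_iff_isUnit.mp (Function.Injective.of_comp (f := U.mulVec) ?_)
  convert hinj using 1
  ext v : 1
  rw [← hX, Function.comp_apply, mulVec_mulVec]

theorem mul_inv_transpose_mul_self_mul_transpose_of_orthonormal [Fintype m] [CommRing R]
    {U : Matrix m n R} {M : Matrix n n R} {X : Matrix m n R} (hU : Uᵀ * U = 1) (hM : IsUnit M)
    (hX : U * M = X) : X * ((Xᵀ * X)⁻¹ * Xᵀ) = U * Uᵀ := by
  subst hX
  have hMdet := (isUnit_iff_isUnit_det M).mp hM
  have hMTdet : IsUnit Mᵀ.det := by rwa [det_transpose]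
  rw [transpose_mul, show Mᵀ * Uᵀ * (U * M) = Mᵀ * M by
      rw [Matrix.mul_assoc, ← Matrix.mul_assoc Uᵀ, hU, Matrix.one_mul],
    Matrix.mul_inv_rev]
  calc U * M * (M⁻¹ * Mᵀ⁻¹ * (Mᵀ * Uᵀ))
      = U * (M * M⁻¹) * (Mᵀ⁻¹ * Mᵀ) * Uᵀ := by simp only [Matrix.mul_assoc]
    _ = U * Uᵀ := by
      rw [mul_nonsing_inv _ hMdet, nonsing_inv_mul _ hMTdet, Matrix.mul_one, Matrix.mul_one]

end Projection

section sigmaMin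

variable {m d : ℕ}

theorem sigmaMin_mul_vnorm_le (A : Matrix (Fin m) (Fin d) ℝ) (v : Fin d → ℝ) :
    sigmaMin A * vnorm v ≤ vnorm (A *ᵥ v) := by
  rcases eq_or_ne v 0 with rfl | hv
  · simp [vnorm]
  have hpos := vnorm_pos hv
  have hbdd : BddBelow {r : ℝ | ∃ w : Fin d → ℝ, vnorm w = 1 ∧ r = vnorm (A *ᵥ w)} :=
    ⟨0, fun r ⟨w, _, hr⟩ => hr ▸ vnorm_nonneg _⟩
  have hle : sigmaMin A ≤ vnorm (A *ᵥ ((vnorm v)⁻¹ • v)) := by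
    refine csInf_le hbdd ⟨_, ?_, rfl⟩
    rw [vnorm_smul, abs_of_pos (inv_pos.mpr hpos), inv_mul_cancel₀ hpos.ne']
  rw [mulVec_smul, vnorm_smul, abs_of_pos (inv_pos.mpr hpos)] at hle
  rwa [← le_div_iff₀ hpos, div_eq_inv_mul]

theorem sigmaMin_pos (hd : 0 < d) {A : Matrix (Fin m) (Fin d) ℝ}
    (hA : Function.Injective A.mulVec) : 0 < sigmaMin A := by
  obtain ⟨K, hK, hanti⟩ := (toLpLin 2 2 A).injective_iff_antilipschitz.mp fun x y hxy =>
    WithLp.ofLp_injective _ (hA (by simpa using congrArg WithLp.ofLp hxy))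
  refine lt_of_lt_of_le (inv_pos.mpr hK) (le_csInf ?_ ?_)
  · refine ⟨_, Pi.single ⟨0, hd⟩ 1, ?_, rfl⟩
    simp [vnorm, Pi.single_apply, apply_ite (· ^ 2)]
  · rintro r ⟨w, hw, rfl⟩
    have h := ZeroHomClass.bound_of_antilipschitz (toLpLin 2 2 A) hanti (toLp 2 w)
    rw [← vnorm_eq_norm, hw, toLpLin_toLp, toLin'_apply, ← vnorm_eq_norm] at h
    rwa [inv_le_iff_one_le_mul₀' (by exact_mod_cast hK)]

theorem vnorm_le_vnorm_gram_mulVec_div_sigmaMin_sq {A : Matrix (Fin m) (Fin d) ℝ}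
    (hA : Function.Injective A.mulVec) (z : Fin d → ℝ) :
    vnorm z ≤ vnorm ((Aᵀ * A) *ᵥ z) / sigmaMin A ^ 2 := by
  rcases eq_or_ne z 0 with rfl | hz
  · simp [vnorm]
  have hd : 0 < d := Nat.pos_of_ne_zero (by rintro rfl; exact hz (Subsingleton.elim _ _))
  have hσ := sigmaMin_pos hd hA
  have hzpos := vnorm_pos hz
  have hbound : (sigmaMin A * vnorm z) ^ 2 ≤ vnorm ((Aᵀ * A) *ᵥ z) * vnorm z :=
    calc (sigmaMin A * vnorm z) ^ 2 ≤ vnorm (A *ᵥ z) ^ 2 :=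
          pow_le_pow_left₀ (by positivity) (sigmaMin_mul_vnorm_le A z) 2
      _ = (Aᵀ * A) *ᵥ z ⬝ᵥ z := by
          rw [vnorm_sq, ← mulVec_mulVec, mulVec_transpose, ← dotProduct_mulVec, dotProduct_comm]
      _ ≤ vnorm ((Aᵀ * A) *ᵥ z) * vnorm z := dotProduct_le_vnorm_mul_vnorm _ _
  rw [le_div_iff₀ (by positivity)]
  nlinarith

end sigmaMin

theorem stmt_2_general {n d c : ℕ}
    (X : Matrix (Fin n) (Fin d) ℝ) (hrank : X.rank = d)
    (y : Fin n → ℝ)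
    (U : Matrix (Fin n) (Fin d) ℝ) (hU : Uᵀ * U = 1)
    (hcol : LinearMap.range U.mulVecLin = LinearMap.range X.mulVecLin)
    (βlsr : Fin d → ℝ) (hβ : βlsr = ((Xᵀ * X)⁻¹ * Xᵀ).mulVec y)
    (S : Matrix (Fin c) (Fin n) ℝ) (hS : (S * U).rank = d)
    (βt : Fin d → ℝ)
    (hmin : ∀ β : Fin d → ℝ,
      vnorm (S.mulVec y - (S * X).mulVec βt) ≤ vnorm (S.mulVec y - (S * X).mulVec β))
    (z : Fin d → ℝ) (hz : z = (Uᵀ * X).mulVec (βlsr - βt)) :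
    vnorm z
      ≤ vnorm ((Uᵀ * Sᵀ * S).mulVec (y - (U * Uᵀ).mulVec y)) / sigmaMin (S * U) ^ 2 := by
  set M := Uᵀ * X
  have hUM : U * M = X := mul_transpose_mul_eq_of_range_le hU hcol.ge
  have hM : IsUnit M := isUnit_of_mul_eq_of_mulVec_injective hUM
    (mulVec_injective_of_rank_eq X (by rwa [Fintype.card_fin]))
  have hfit : X *ᵥ βlsr = (U * Uᵀ) *ᵥ y := by
    rw [hβ, mulVec_mulVec, mul_inv_transpose_mul_self_mul_transpose_of_orthonormal hU hM hUM]
  have hnormal : (S * U)ᵀ *ᵥ (S *ᵥ (y - X *ᵥ βt)) = 0 := by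
    have h := transpose_mulVec_sub_eq_zero_of_isMin (S * X) (S *ᵥ y) hmin
    rw [← hUM, ← Matrix.mul_assoc, transpose_mul, ← mulVec_mulVec] at h
    have h' := mulVec_injective_iff_isUnit.mpr ((isUnit_transpose M).mpr hM)
      (h.trans (mulVec_zero _).symm)
    rwa [Matrix.mul_assoc, hUM, ← mulVec_mulVec, ← mulVec_sub] at h'
  have hUz : U *ᵥ z = (y - X *ᵥ βt) - (y - (U * Uᵀ) *ᵥ y) := by
    rw [hz, mulVec_mulVec, hUM, mulVec_sub, hfit]
    abel
  have hgram : ((S * U)ᵀ * (S * U)) *ᵥ z = -((Uᵀ * Sᵀ * S) *ᵥ (y - (U * Uᵀ) *ᵥ y)) := by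
    rw [← mulVec_mulVec, ← mulVec_mulVec, hUz, mulVec_sub, mulVec_sub, hnormal, zero_sub,
      mulVec_mulVec, transpose_mul]
  calc vnorm z ≤ vnorm (((S * U)ᵀ * (S * U)) *ᵥ z) / sigmaMin (S * U) ^ 2 :=
        vnorm_le_vnorm_gram_mulVec_div_sigmaMin_sq
          (mulVec_injective_of_rank_eq _ (by rwa [Fintype.card_fin])) z
    _ = _ := by rw [hgram, vnorm_neg]

/-- Deterministic bound for sketched least squares: with `β̃` any minimizer of
`β ↦ ‖Sy − SXβ‖²` and `z = UᵀX(β_lsr − β̃)`, one has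
`‖z‖ ≤ ‖UᵀSᵀS(I − UUᵀ)y‖ / σ_min²(SU)`. -/
theorem stmt_2 {n d c : ℕ} (hdn : d ≤ n)
    (X : Matrix (Fin n) (Fin d) ℝ) (hrank : X.rank = d)
    (y : Fin n → ℝ)
    (U : Matrix (Fin n) (Fin d) ℝ) (hU : Uᵀ * U = 1)
    (hcol : LinearMap.range U.mulVecLin = LinearMap.range X.mulVecLin)
    (βlsr : Fin d → ℝ) (hβ : βlsr = ((Xᵀ * X)⁻¹ * Xᵀ).mulVec y)
    (S : Matrix (Fin c) (Fin n) ℝ) (hS : (S * U).rank = d)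
    (βt : Fin d → ℝ)
    (hmin : ∀ β : Fin d → ℝ,
      vnorm (S.mulVec y - (S * X).mulVec βt) ≤ vnorm (S.mulVec y - (S * X).mulVec β))
    (z : Fin d → ℝ) (hz : z = (Uᵀ * X).mulVec (βlsr - βt)) :
    vnorm z
      ≤ vnorm ((Uᵀ * Sᵀ * S).mulVec (y - (U * Uᵀ).mulVec y)) / sigmaMin (S * U) ^ 2 :=
  stmt_2_general X hrank y U hU hcol βlsr hβ S hS βt hmin z hz
end

section
/- Let U ∈ ℝ^{n×d} have orthonormal columns, let Y ∈ ℝ^{n×p}, and fix c ≥ 1. For i = 1, …, n let l_i = ‖u^(i)‖₂² (the squared norm of the i-th row of U) and p_i = min{1, c·l_i/d}. Let δ₁, …, δ_n be independent {0,1}-valued random variables with P(δ_i = 1) = p_i, and let D be the random n×n diagonal matrix with D_ii = δ_i/p_i when p_i > 0 and D_ii = 0 when p_i = 0. Then E‖UᵀY − UᵀDY‖_F ≤ (1/√c)·‖U‖_F·‖Y‖_F = √(d/c)·‖Y‖_F. -/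
/-!
Each entry of `UᵀY - UᵀDY` is `∑ᵢ Uᵢⱼ Yᵢₖ (1 - δᵢ/pᵢ)`, a sum of independent centred terms, so
its second moment is the sum of the variances, and summing over entries gives
`E ‖UᵀY - UᵀDY‖_F² = ∑ᵢ (1/pᵢ - 1) lᵢ ‖y⁽ⁱ⁾‖²`. The choice `pᵢ = min {1, c lᵢ / d}` makes
`(1/pᵢ - 1) lᵢ ≤ d/c`, so the second moment is at most `(d/c) ‖Y‖_F²`, and `d = ‖U‖_F²`.
Jensen's inequality for the concave square root bounds the first moment by the square root of
the second.
-/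

open Matrix BigOperators
open scoped Classical

/-- Frobenius norm of a real matrix. -/
noncomputable def fnorm {a b : ℕ} (M : Matrix (Fin a) (Fin b) ℝ) : ℝ :=
  Real.sqrt (∑ i, ∑ j, M i j ^ 2)

/-- Probability of the outcome `e` when `e i = true` independently with probability `p i`. -/
noncomputable def bernWeight {n : ℕ} (p : Fin n → ℝ) (e : Fin n → Bool) : ℝ :=
  ∏ i, if e i then p i else 1 - p i

open Finset

section Bernoulli

variable {n : ℕ} (p : Fin n → ℝ)

theorem sum_bernWeight_mul_prod (g : Fin n → Bool → ℝ) :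
    ∑ e : Fin n → Bool, bernWeight p e * ∏ i, g i (e i)
      = ∏ i, (p i * g i true + (1 - p i) * g i false) := by
  have h := sum_prod_piFinset univ fun i b => (if b then p i else 1 - p i) * g i b
  rw [Fintype.piFinset_univ] at h
  simpa [bernWeight, ← prod_mul_distrib] using h

theorem sum_bernWeight : ∑ e : Fin n → Bool, bernWeight p e = 1 := by
  simpa using sum_bernWeight_mul_prod p fun _ _ => 1

theorem bernWeight_nonneg {p : Fin n → ℝ} (hp₀ : ∀ i, 0 ≤ p i) (hp₁ : ∀ i, p i ≤ 1)
    (e : Fin n → Bool) : 0 ≤ bernWeight p e :=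
  prod_nonneg fun i _ => by split <;> linarith [hp₀ i, hp₁ i]

theorem sum_bernWeight_mul_apply (i : Fin n) (g : Bool → ℝ) :
    ∑ e : Fin n → Bool, bernWeight p e * g (e i) = p i * g true + (1 - p i) * g false := by
  have h := sum_bernWeight_mul_prod p fun m b => if m = i then g b else 1
  simp only [prod_ite_eq', mem_univ, if_true] at h
  rw [h, prod_eq_single i (fun m _ hm => by simp [hm]) (by simp)]
  simp

theorem sum_bernWeight_mul_apply_mul_apply {i j : Fin n} (hij : i ≠ j) (g h : Bool → ℝ) :
    ∑ e : Fin n → Bool, bernWeight p e * (g (e i) * h (e j))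
      = (p i * g true + (1 - p i) * g false) * (p j * h true + (1 - p j) * h false) := by
  have H := sum_bernWeight_mul_prod p fun m b =>
    (if m = i then g b else 1) * (if m = j then h b else 1)
  simp only [prod_mul_distrib, prod_ite_eq', mem_univ, if_true] at H
  rw [H, ← prod_mul_prod_compl {i, j}, prod_pair hij,
    prod_eq_one (s := {i, j}ᶜ) (fun m hm => by
      simp only [mem_compl, mem_insert, mem_singleton, not_or] at hm
      simp [hm.1, hm.2])]
  simp [hij, hij.symm]

theorem sum_bernWeight_mul_sum_sq (f : Fin n → Bool → ℝ)
    (hf : ∀ i, p i * f i true + (1 - p i) * f i false = 0) :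
    ∑ e : Fin n → Bool, bernWeight p e * (∑ i, f i (e i)) ^ 2
      = ∑ i, (p i * f i true ^ 2 + (1 - p i) * f i false ^ 2) := by
  calc ∑ e : Fin n → Bool, bernWeight p e * (∑ i, f i (e i)) ^ 2
      = ∑ i, ∑ j, ∑ e : Fin n → Bool, bernWeight p e * (f i (e i) * f j (e j)) := by
        simp_rw [sq, sum_mul_sum, mul_sum]
        rw [sum_comm]
        exact sum_congr rfl fun i _ => sum_comm
    _ = ∑ i, ∑ e : Fin n → Bool, bernWeight p e * f i (e i) ^ 2 := by
        refine sum_congr rfl fun i _ => ?_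
        rw [sum_eq_single i (fun j _ hji => ?_) (by simp)]
        · simp_rw [sq]
        · rw [sum_bernWeight_mul_apply_mul_apply p hji.symm, hf, zero_mul]
    _ = _ := sum_congr rfl fun i _ => sum_bernWeight_mul_apply p i fun b => f i b ^ 2

theorem sum_bernWeight_mul_sum_importance_sq (a : Fin n → ℝ) (ha : ∀ i, a i ≠ 0 → p i ≠ 0) :
    ∑ e : Fin n → Bool, bernWeight p e * (∑ i, a i * (1 - if e i then 1 / p i else 0)) ^ 2
      = ∑ i, a i ^ 2 * (1 / p i - 1) := by
  have hcases : ∀ i, a i = 0 ∨ p i ≠ 0 := fun i => (eq_or_ne _ _).imp_right (ha i)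
  rw [sum_bernWeight_mul_sum_sq p (fun i b => a i * (1 - if b then 1 / p i else 0)) fun i => ?mean]
  refine sum_congr rfl fun i _ => ?_
  all_goals
    rcases hcases i with hai | hpi
    · simp [hai]
    · simp only [if_true, Bool.false_eq_true, if_false]
      field_simp
      ring

end Bernoulli

theorem transpose_mul_sub_transpose_mul_diagonal_mul_apply {m k l R : Type*} [Fintype m]
    [DecidableEq m] [CommRing R] (U : Matrix m k R) (w : m → R) (Y : Matrix m l R)
    (j : k) (t : l) :
    (Uᵀ * Y - Uᵀ * diagonal w * Y) j t = ∑ i, U i j * Y i t * (1 - w i) := by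
  rw [Matrix.sub_apply, mul_apply, mul_apply]
  simp only [mul_diagonal, transpose_apply, ← sum_sub_distrib]
  exact sum_congr rfl fun i _ => by ring

theorem sum_bernWeight_mul_sum_sq_sampling_error {n : ℕ} {k l : Type*} [Fintype k] [Fintype l]
    (p : Fin n → ℝ) (U : Matrix (Fin n) k ℝ) (Y : Matrix (Fin n) l ℝ)
    (hp : ∀ i j, U i j ≠ 0 → p i ≠ 0) :
    ∑ e : Fin n → Bool, bernWeight p e *
        ∑ j, ∑ t, ((Uᵀ * Y - Uᵀ * diagonal (fun i => if e i then 1 / p i else 0) * Y) j t) ^ 2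
      = ∑ i, (1 / p i - 1) * (∑ j, U i j ^ 2) * ∑ t, Y i t ^ 2 := by
  calc _ = ∑ j, ∑ t, ∑ e : Fin n → Bool, bernWeight p e *
          (∑ i, U i j * Y i t * (1 - if e i then 1 / p i else 0)) ^ 2 := by
        simp_rw [transpose_mul_sub_transpose_mul_diagonal_mul_apply, mul_sum]
        rw [sum_comm]
        exact sum_congr rfl fun j _ => sum_comm
    _ = ∑ j, ∑ t, ∑ i, (U i j * Y i t) ^ 2 * (1 / p i - 1) :=
        sum_congr rfl fun j _ => sum_congr rfl fun t _ =>
          sum_bernWeight_mul_sum_importance_sq p _ fun i h => hp i j (left_ne_zero_of_mul h)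
    _ = _ := by
        rw [sum_comm_cycle]
        refine sum_congr rfl fun i _ => ?_
        rw [mul_assoc, sum_mul_sum]
        simp only [mul_sum]
        exact sum_congr rfl fun j _ => sum_congr rfl fun t _ => by ring

theorem sum_mul_sqrt_le_sqrt_sum_mul {ι : Type*} [Fintype ι] {w S : ι → ℝ}
    (hw₀ : ∀ i, 0 ≤ w i) (hw₁ : ∑ i, w i = 1) (hS : ∀ i, 0 ≤ S i) :
    ∑ i, w i * √(S i) ≤ √(∑ i, w i * S i) :=
  Real.strictConcaveOn_sqrt.concaveOn.le_map_sum (fun i _ => hw₀ i) hw₁ fun i _ => hS i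

theorem one_div_min_one_mul_div_sub_one_mul_le {a b x : ℝ} (ha : 0 ≤ a) (hb : 0 ≤ b)
    (hx : 0 ≤ x) : (1 / min 1 (a * x / b) - 1) * x ≤ b / a := by
  have hba : 0 ≤ b / a := div_nonneg hb ha
  rcases le_total 1 (a * x / b) with h | h
  · simpa [min_eq_left h] using hba
  rw [min_eq_right h]
  rcases (div_nonneg (mul_nonneg ha hx) hb).eq_or_lt with h0 | h0
  · rw [← h0]
    linarith
  · obtain ⟨ha', hx'⟩ : a ≠ 0 ∧ x ≠ 0 := mul_ne_zero_iff.1 fun h' => by simp [h'] at h0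
    have hb' : b ≠ 0 := fun h' => by simp [h'] at h0
    have hax : (1 / (a * x / b) - 1) * x = b / a - x := by
      field_simp
    rw [hax]
    linarith

theorem sum_sum_sq_eq_card_of_transpose_mul_self_eq_one {m k : Type*} [Fintype m] [Fintype k]
    [DecidableEq k] {U : Matrix m k ℝ} (hU : Uᵀ * U = 1) :
    ∑ i, ∑ j, U i j ^ 2 = Fintype.card k := by
  have h := congrArg trace hU
  rw [trace_one, trace] at h
  simp only [diag_apply, mul_apply, transpose_apply] at h
  rw [sum_comm, ← h]
  simp [sq]

/-- Leverage-score sampling, expected error of approximate matrix multiplication: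
with `l_i = ‖u^(i)‖²`, `p_i = min{1, c l_i / d}`, and `D` the random diagonal matrix with
`D_ii = δ_i / p_i` (and `0` if `p_i = 0`) for independent Bernoulli(`p_i`) variables `δ_i`,
`E ‖UᵀY − UᵀDY‖_F ≤ (1/√c)·‖U‖_F·‖Y‖_F`. -/
theorem stmt_5 {n d p : ℕ}
    (U : Matrix (Fin n) (Fin d) ℝ) (hU : Uᵀ * U = 1)
    (Y : Matrix (Fin n) (Fin p) ℝ)
    (c : ℕ) (hc : 1 ≤ c)
    (l : Fin n → ℝ) (hl : l = fun i => ∑ j, U i j ^ 2)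
    (prob : Fin n → ℝ) (hprob : prob = fun i => min 1 ((c : ℝ) * l i / d))
    (D : (Fin n → Bool) → Matrix (Fin n) (Fin n) ℝ)
    (hD : D = fun e => Matrix.diagonal fun i => if e i then 1 / prob i else 0) :
    (∑ e : Fin n → Bool, bernWeight prob e * fnorm (Uᵀ * Y - Uᵀ * D e * Y))
      ≤ (1 / Real.sqrt c) * fnorm U * fnorm Y := by
  have hc₀ : (0 : ℝ) < c := by exact_mod_cast hc
  have hl₀ : ∀ i, 0 ≤ l i := fun i => hl ▸ sum_nonneg fun j _ => sq_nonneg _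
  have hprob₀ : ∀ i, 0 ≤ prob i := fun i => hprob ▸
    le_min zero_le_one (div_nonneg (mul_nonneg hc₀.le (hl₀ i)) d.cast_nonneg)
  have hprob₁ : ∀ i, prob i ≤ 1 := fun i => hprob ▸ min_le_left _ _
  have hsupp : ∀ i j, U i j ≠ 0 → prob i ≠ 0 := by
    intro i j hij
    have hli : 0 < l i := hl ▸ (by positivity : 0 < U i j ^ 2).trans_le
      (single_le_sum (fun j _ => sq_nonneg (U i j)) (mem_univ j))
    have hd : (0 : ℝ) < d := by exact_mod_cast j.pos
    rw [hprob]
    exact (lt_min one_pos (by positivity)).ne'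
  have hlev : ∀ i, (1 / prob i - 1) * l i ≤ d / c := by
    intro i
    rw [hprob]
    exact one_div_min_one_mul_div_sub_one_mul_le hc₀.le d.cast_nonneg (hl₀ i)
  calc ∑ e : Fin n → Bool, bernWeight prob e * fnorm (Uᵀ * Y - Uᵀ * D e * Y)
      ≤ √(∑ e : Fin n → Bool, bernWeight prob e *
          ∑ j, ∑ t, ((Uᵀ * Y - Uᵀ * D e * Y) j t) ^ 2) :=
        sum_mul_sqrt_le_sqrt_sum_mul (bernWeight_nonneg hprob₀ hprob₁) (sum_bernWeight prob)
          fun e => by positivity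
    _ = √(∑ i, (1 / prob i - 1) * l i * ∑ t, Y i t ^ 2) := by
        simp only [hD]
        rw [sum_bernWeight_mul_sum_sq_sampling_error prob U Y hsupp, hl]
    _ ≤ √(d / c * ∑ i, ∑ t, Y i t ^ 2) := by
        rw [mul_sum]
        gcongr with i
        exact hlev i
    _ = _ := by
        rw [fnorm, fnorm, sum_sum_sq_eq_card_of_transpose_mul_self_eq_one hU, Fintype.card_fin,
          Real.sqrt_mul (by positivity), Real.sqrt_div' _ hc₀.le]
        ring
end
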